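/- Let m be a positive natural number and s : Fin m → ℝ with s i ≥ Real.exp 2 for all i. Define the Gini coefficient of a positive weight function w : Fin m → ℝ as G(w) = (∑_{i} ∑_{j} |w i − w j|) / (2 · m · ∑_{i} w i). Then G(fun i => Real.log (s i)) ≤ G(fun i => Real.sqrt (s i)); that is, the Gini coefficient of the logarithmic stake weights is at most that of the square-root stake weights. -/

import Mathlib

open Finset

/-!
Cross-multiplying, the claim is `D(h ∘ s) · Σ g ∘ s ≤ D(g ∘ s) · Σ h ∘ s` for `g = √·`,
`h = log`, where `D(w) = ∑ᵢ ∑ⱼ |wᵢ - wⱼ|`. Both sides are a third of a sum over triples of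
validators of a symmetric cyclic expression, so it suffices to compare these for one triple.
For a sorted triple the two cyclic expressions differ by exactly `2 (g_max h_min - h_max g_min)`,
which is nonnegative because `h / g` decreases with the stake while `g` and `h` increase.
-/

/-- The Gini coefficient of a weight function `w` on `m` validators, via the
mean-absolute-difference formula. -/
noncomputable def gini (m : ℕ) (w : Fin m → ℝ) : ℝ :=
  (∑ i, ∑ j, |w i - w j|) / (2 * m * ∑ i, w i)

lemma cyclic_abs_sub_mul_le_of_le {a b c a' b' c' : ℝ} (hcb : c ≤ b) (hba : b ≤ a)
    (hcb' : c' ≤ b') (hba' : b' ≤ a') (hac : a' * c ≤ c' * a) :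
    |a' - b'| * c + |b' - c'| * a + |a' - c'| * b ≤
      |a - b| * c' + |b - c| * a' + |a - c| * b' := by
  rw [abs_of_nonneg (sub_nonneg.2 hba), abs_of_nonneg (sub_nonneg.2 hcb),
    abs_of_nonneg (sub_nonneg.2 (hcb.trans hba)), abs_of_nonneg (sub_nonneg.2 hba'),
    abs_of_nonneg (sub_nonneg.2 hcb'), abs_of_nonneg (sub_nonneg.2 (hcb'.trans hba'))]
  linarith

lemma sum_sum_sum_cyclic {ι : Type*} [Fintype ι] (d : ι → ι → ℝ) (v : ι → ℝ) :
    ∑ i, ∑ j, ∑ k, (d i j * v k + d j k * v i + d i k * v j) =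
      3 * ((∑ i, ∑ j, d i j) * ∑ k, v k) := by
  simp only [sum_add_distrib, ← mul_sum, ← sum_mul]
  ring

lemma gini_eq_div_div (m : ℕ) (w : Fin m → ℝ) :
    gini m w = (∑ i, ∑ j, |w i - w j|) / (∑ i, w i) / (2 * m) := by
  rw [gini, div_div, mul_comm]

lemma gini_le_gini_of_mul_le {m : ℕ} {u v : Fin m → ℝ} (hu : 0 < ∑ i, u i)
    (hv : 0 < ∑ i, v i)
    (h : (∑ i, ∑ j, |v i - v j|) * ∑ i, u i ≤ (∑ i, ∑ j, |u i - u j|) * ∑ i, v i) :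
    gini m v ≤ gini m u := by
  rw [gini_eq_div_div, gini_eq_div_div]
  gcongr ?_ / _
  rwa [div_le_div_iff₀ hv hu]

section
variable {S : Set ℝ} {g h : ℝ → ℝ}

lemma cyclic_abs_sub_mul_le_of_antitoneOn_div (hg : MonotoneOn g S) (hh : MonotoneOn h S)
    (hg0 : ∀ x ∈ S, 0 < g x) (hhg : AntitoneOn (fun x => h x / g x) S)
    {x y z : ℝ} (hx : x ∈ S) (hy : y ∈ S) (hz : z ∈ S) :
    |h x - h y| * g z + |h y - h z| * g x + |h x - h z| * g y ≤
      |g x - g y| * h z + |g y - g z| * h x + |g x - g z| * h y := by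
  wlog hyx : y ≤ x generalizing x y z
  · have := this hy hx hz (le_of_not_ge hyx)
    simp only [abs_sub_comm] at this ⊢; linarith
  wlog hzx : z ≤ x generalizing x y z
  · have := this hz hy hx (hyx.trans (le_of_not_ge hzx)) (le_of_not_ge hzx)
    simp only [abs_sub_comm] at this ⊢; linarith
  wlog hzy : z ≤ y generalizing y z
  · have := this hz hy hzx hyx (le_of_not_ge hzy)
    simp only [abs_sub_comm] at this ⊢; linarith
  have hratio : h x * g z ≤ h z * g x := by
    have := hhg hz hx hzx
    rwa [div_le_div_iff₀ (hg0 x hx) (hg0 z hz)] at this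
  exact cyclic_abs_sub_mul_le_of_le (hg hz hy hzy) (hg hy hx hyx) (hh hz hy hzy)
    (hh hy hx hyx) hratio

lemma sum_abs_sub_mul_sum_le {ι : Type*} [Fintype ι]
    (hg : MonotoneOn g S) (hh : MonotoneOn h S) (hg0 : ∀ x ∈ S, 0 < g x)
    (hhg : AntitoneOn (fun x => h x / g x) S) {s : ι → ℝ} (hs : ∀ i, s i ∈ S) :
    (∑ i, ∑ j, |h (s i) - h (s j)|) * ∑ k, g (s k) ≤
      (∑ i, ∑ j, |g (s i) - g (s j)|) * ∑ k, h (s k) := by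
  have := sum_le_sum fun i (_ : i ∈ univ) => sum_le_sum fun j (_ : j ∈ univ) =>
    sum_le_sum fun k (_ : k ∈ univ) =>
      cyclic_abs_sub_mul_le_of_antitoneOn_div hg hh hg0 hhg (hs i) (hs j) (hs k)
  rw [sum_sum_sum_cyclic (fun i j => |h (s i) - h (s j)|) (fun k => g (s k)),
    sum_sum_sum_cyclic (fun i j => |g (s i) - g (s j)|) (fun k => h (s k))] at this
  linarith

theorem gini_comp_le_of_antitoneOn_div {m : ℕ} (hm : 0 < m)
    (hg : MonotoneOn g S) (hh : MonotoneOn h S) (hg0 : ∀ x ∈ S, 0 < g x)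
    (hh0 : ∀ x ∈ S, 0 < h x) (hhg : AntitoneOn (fun x => h x / g x) S)
    {s : Fin m → ℝ} (hs : ∀ i, s i ∈ S) :
    gini m (h ∘ s) ≤ gini m (g ∘ s) :=
  have : Nonempty (Fin m) := ⟨⟨0, hm⟩⟩
  gini_le_gini_of_mul_le (sum_pos (fun i _ => hg0 _ (hs i)) univ_nonempty)
    (sum_pos (fun i _ => hh0 _ (hs i)) univ_nonempty) (sum_abs_sub_mul_sum_le hg hh hg0 hhg hs)

end

/-- For stakes at least `e²`, the Gini coefficient of the logarithmic stake weights
is at most that of the square-root stake weights. -/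
theorem lsw_gini_le_srsw (m : ℕ) (hm : 0 < m) (s : Fin m → ℝ)
    (hs : ∀ i, Real.exp 2 ≤ s i) :
    gini m (fun i => Real.log (s i)) ≤ gini m (fun i => Real.sqrt (s i)) := by
  have hgt_one : ∀ x ∈ Set.Ici (Real.exp 2), 1 < x := fun x hx =>
    (Real.one_lt_exp_iff.2 two_pos).trans_le hx
  exact gini_comp_le_of_antitoneOn_div hm (Real.sqrt_monotone.monotoneOn _)
    (Real.strictMonoOn_log.monotoneOn.mono fun x hx => zero_lt_one.trans (hgt_one x hx))
    (fun x hx => Real.sqrt_pos.2 (zero_lt_one.trans (hgt_one x hx)))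
    (fun x hx => Real.log_pos (hgt_one x hx)) Real.log_div_sqrt_antitoneOn hs
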